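/- Complex traceless Simons identity (equation (3.1)): for a conformal minimal immersion f : ℂ → S^n, the Hopf field Ω is a normal field and satisfies Δ^⊥ Ω = 4 e^{−4ρ} ( ⟨Ω, Ω⟩ Ω̄ − ⟨Ω, Ω̄⟩ Ω ) pointwise on ℂ. -/

import Mathlib

open Complex

noncomputable section

/-- Wirtinger derivative `∂_z` of a map `ℂ → ℂ`. -/
def wirtZ (g : ℂ → ℂ) (z : ℂ) : ℂ :=
  (1 / 2 : ℂ) * (fderiv ℝ g z 1 - Complex.I * fderiv ℝ g z Complex.I)

/-- Wirtinger derivative `∂_z̄` of a map `ℂ → ℂ`. -/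
def wirtZbar (g : ℂ → ℂ) (z : ℂ) : ℂ :=
  (1 / 2 : ℂ) * (fderiv ℝ g z 1 + Complex.I * fderiv ℝ g z Complex.I)

/-- Componentwise `∂_z` for vector-valued maps. -/
def WZ {m : ℕ} (g : ℂ → Fin m → ℂ) : ℂ → Fin m → ℂ :=
  fun z i => wirtZ (fun w => g w i) z

/-- Componentwise `∂_z̄` for vector-valued maps. -/
def WZb {m : ℕ} (g : ℂ → Fin m → ℂ) : ℂ → Fin m → ℂ :=
  fun z i => wirtZbar (fun w => g w i) z

/-- Complex-bilinear (non-conjugating) pairing. -/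
def pairC {m : ℕ} (u v : Fin m → ℂ) : ℂ := ∑ i, u i * v i

/-- Componentwise complex conjugation. -/
def conjV {m : ℕ} (u : Fin m → ℂ) : Fin m → ℂ := fun i => (starRingEnd ℂ) (u i)

/-- Complexification of a real vector. -/
def cV {m : ℕ} (u : Fin m → ℝ) : Fin m → ℂ := fun i => (u i : ℂ)

/-- Complexification of a real-vector-valued map. -/
def Fc {m : ℕ} (f : ℂ → Fin m → ℝ) : ℂ → Fin m → ℂ := fun z => cV (f z)

/-- `∂_z` of (the complexification of) a real-valued function. -/
def dZ (ρ : ℂ → ℝ) (z : ℂ) : ℂ := wirtZ (fun w => ((ρ w : ℝ) : ℂ)) z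

/-- `f : ℂ → S^n ⊂ ℝ^{n+1}` is a conformal minimal immersion with conformal factor `ρ`:
`⟨f_z, f_z⟩ = 0`, `⟨f_z, f̄_z⟩ = (1/2) e^{2ρ}`, and `f_{z z̄} = −(1/2) e^{2ρ} f`. -/
def IsConfMinImm {m : ℕ} (f : ℂ → Fin m → ℝ) (ρ : ℂ → ℝ) : Prop :=
  ContDiff ℝ (⊤ : ℕ∞) f ∧ ContDiff ℝ (⊤ : ℕ∞) ρ ∧
  (∀ z, ∑ i, (f z i) ^ 2 = 1) ∧
  (∀ z, pairC (WZ (Fc f) z) (WZ (Fc f) z) = 0) ∧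
  (∀ z, pairC (WZ (Fc f) z) (conjV (WZ (Fc f) z)) = (1 / 2 : ℂ) * (Real.exp (2 * ρ z) : ℂ)) ∧
  (∀ z i, WZb (WZ (Fc f)) z i = -(1 / 2 : ℂ) * (Real.exp (2 * ρ z) : ℂ) * Fc f z i)

/-- The Hopf field `Ω = f_{zz} − 2 ρ_z f_z`. -/
def Hopf {m : ℕ} (f : ℂ → Fin m → ℝ) (ρ : ℂ → ℝ) : ℂ → Fin m → ℂ :=
  fun z i => WZ (WZ (Fc f)) z i - 2 * dZ ρ z * WZ (Fc f) z i

/-- Real part `Ω₁` of the Hopf field, viewed in `ℂ^{n+1}`. -/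
def HopfRe {m : ℕ} (f : ℂ → Fin m → ℝ) (ρ : ℂ → ℝ) : ℂ → Fin m → ℂ :=
  fun z i => ((Hopf f ρ z i).re : ℂ)

/-- Imaginary part `Ω₂` of the Hopf field, viewed in `ℂ^{n+1}`. -/
def HopfIm {m : ℕ} (f : ℂ → Fin m → ℝ) (ρ : ℂ → ℝ) : ℂ → Fin m → ℂ :=
  fun z i => ((Hopf f ρ z i).im : ℂ)

/-- Normal projection `E^⊥` of a constant vector `E ∈ ℝ^{n+1}`. -/
def Eperp {m : ℕ} (f : ℂ → Fin m → ℝ) (ρ : ℂ → ℝ) (E : Fin m → ℝ) : ℂ → Fin m → ℂ :=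
  fun z i => (E i : ℂ) - pairC (cV E) (Fc f z) * Fc f z i
    - 2 * (Real.exp (-2 * ρ z) : ℂ) * pairC (cV E) (WZ (Fc f) z) * WZb (Fc f) z i
    - 2 * (Real.exp (-2 * ρ z) : ℂ) * pairC (cV E) (WZb (Fc f) z) * WZ (Fc f) z i

/-- `ψ` is a normal field along `f`. -/
def IsNormalField {m : ℕ} (f : ℂ → Fin m → ℝ) (ψ : ℂ → Fin m → ℂ) : Prop :=
  ∀ z, pairC (ψ z) (Fc f z) = 0 ∧ pairC (ψ z) (WZ (Fc f) z) = 0 ∧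
    pairC (ψ z) (WZb (Fc f) z) = 0

/-- Normal covariant derivative `N_z ψ = ψ_z + 2 e^{−2ρ} ⟨ψ, Ω⟩ f_z̄`. -/
def NZ {m : ℕ} (f : ℂ → Fin m → ℝ) (ρ : ℂ → ℝ) (ψ : ℂ → Fin m → ℂ) : ℂ → Fin m → ℂ :=
  fun z i => WZ ψ z i
    + 2 * (Real.exp (-2 * ρ z) : ℂ) * pairC (ψ z) (Hopf f ρ z) * WZb (Fc f) z i

/-- Normal covariant derivative `N_z̄ ψ = ψ_z̄ + 2 e^{−2ρ} ⟨ψ, Ω̄⟩ f_z`. -/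
def NZb {m : ℕ} (f : ℂ → Fin m → ℝ) (ρ : ℂ → ℝ) (ψ : ℂ → Fin m → ℂ) : ℂ → Fin m → ℂ :=
  fun z i => WZb ψ z i
    + 2 * (Real.exp (-2 * ρ z) : ℂ) * pairC (ψ z) (conjV (Hopf f ρ z)) * WZ (Fc f) z i

/-- Normal Laplacian `Δ^⊥ ψ = 2 e^{−2ρ} (N_z̄ (N_z ψ) + N_z (N_z̄ ψ))`. -/
def LapPerp {m : ℕ} (f : ℂ → Fin m → ℝ) (ρ : ℂ → ℝ) (ψ : ℂ → Fin m → ℂ) : ℂ → Fin m → ℂ :=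
  fun z i => 2 * (Real.exp (-2 * ρ z) : ℂ) * (NZb f ρ (NZ f ρ ψ) z i + NZ f ρ (NZb f ρ ψ) z i)

/-- Jacobi operator `𝓛 ψ = Δ^⊥ ψ + 2 ψ + 4 e^{−4ρ} (⟨ψ, Ω⟩ Ω̄ + ⟨ψ, Ω̄⟩ Ω)`. -/
def Jacobi {m : ℕ} (f : ℂ → Fin m → ℝ) (ρ : ℂ → ℝ) (ψ : ℂ → Fin m → ℂ) : ℂ → Fin m → ℂ :=
  fun z i => LapPerp f ρ ψ z i + 2 * ψ z i
    + 4 * (Real.exp (-4 * ρ z) : ℂ) *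
      (pairC (ψ z) (Hopf f ρ z) * conjV (Hopf f ρ z) i
        + pairC (ψ z) (conjV (Hopf f ρ z)) * Hopf f ρ z i)

/-- The S⁴ adapted frame setup: `⟨Ω, Ω⟩ ≡ 1`, `Ω₁ = cosh θ · ψ₃`, `Ω₂ = sinh θ · ψ₄`
with `ψ₃, ψ₄` orthonormal normal fields. -/
def S4Frame (f : ℂ → Fin 5 → ℝ) (ρ : ℂ → ℝ) (ψ₃ ψ₄ : ℂ → Fin 5 → ℝ) (θ : ℂ → ℝ) : Prop :=
  ContDiff ℝ (⊤ : ℕ∞) ψ₃ ∧ ContDiff ℝ (⊤ : ℕ∞) ψ₄ ∧ ContDiff ℝ (⊤ : ℕ∞) θ ∧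
  IsNormalField f (Fc ψ₃) ∧ IsNormalField f (Fc ψ₄) ∧
  (∀ z, ∑ i, (ψ₃ z i) ^ 2 = 1) ∧ (∀ z, ∑ i, (ψ₄ z i) ^ 2 = 1) ∧
  (∀ z, ∑ i, ψ₃ z i * ψ₄ z i = 0) ∧
  (∀ z, pairC (Hopf f ρ z) (Hopf f ρ z) = 1) ∧
  (∀ z i, (Hopf f ρ z i).re = Real.cosh (θ z) * ψ₃ z i) ∧
  (∀ z i, (Hopf f ρ z i).im = Real.sinh (θ z) * ψ₄ z i)

abbrev SM (g : ℂ → ℂ) : Prop := ContDiff ℝ ((⊤ : ℕ∞) : WithTop ℕ∞) g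

lemma SM.diff {g : ℂ → ℂ} (h : SM g) : Differentiable ℝ g :=
  h.differentiable (by simp)

lemma SM.dAt {g : ℂ → ℂ} (h : SM g) (z : ℂ) : DifferentiableAt ℝ g z := h.diff z

lemma SM.fderivSM {g : ℂ → ℂ} (h : SM g) : ContDiff ℝ ((⊤ : ℕ∞) : WithTop ℕ∞) (fderiv ℝ g) :=
  h.fderiv_right (by exact_mod_cast le_top)

lemma SM.wirtZ {g : ℂ → ℂ} (h : SM g) : SM (wirtZ g) := by
  unfold _root_.wirtZ
  exact contDiff_const.mul ((h.fderivSM.clm_apply contDiff_const).sub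
    (contDiff_const.mul (h.fderivSM.clm_apply contDiff_const)))

lemma SM.wirtZbar {g : ℂ → ℂ} (h : SM g) : SM (wirtZbar g) := by
  unfold _root_.wirtZbar
  exact contDiff_const.mul ((h.fderivSM.clm_apply contDiff_const).add
    (contDiff_const.mul (h.fderivSM.clm_apply contDiff_const)))

lemma SM.add' {g h : ℂ → ℂ} (hg : SM g) (hh : SM h) : SM (fun w => g w + h w) := by
  exact ContDiff.add hg hh
lemma SM.mul' {g h : ℂ → ℂ} (hg : SM g) (hh : SM h) : SM (fun w => g w * h w) := hg.mul hh
lemma SM.conj' {g : ℂ → ℂ} (hg : SM g) : SM (fun w => (starRingEnd ℂ) (g w)) :=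
  Complex.conjCLE.toContinuousLinearMap.contDiff.comp hg

lemma wirtZ_add {g h : ℂ → ℂ} {z : ℂ} (hg : DifferentiableAt ℝ g z)
    (hh : DifferentiableAt ℝ h z) :
    wirtZ (fun w => g w + h w) z = wirtZ g z + wirtZ h z := by
  unfold wirtZ; rw [fderiv_fun_add hg hh]; simp; ring

lemma wirtZbar_add {g h : ℂ → ℂ} {z : ℂ} (hg : DifferentiableAt ℝ g z)
    (hh : DifferentiableAt ℝ h z) :
    wirtZbar (fun w => g w + h w) z = wirtZbar g z + wirtZbar h z := by
  unfold wirtZbar; rw [fderiv_fun_add hg hh]; simp; ring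

lemma wirtZ_sub {g h : ℂ → ℂ} {z : ℂ} (hg : DifferentiableAt ℝ g z)
    (hh : DifferentiableAt ℝ h z) :
    wirtZ (fun w => g w - h w) z = wirtZ g z - wirtZ h z := by
  unfold wirtZ; rw [fderiv_fun_sub hg hh]; simp; ring

lemma wirtZbar_sub {g h : ℂ → ℂ} {z : ℂ} (hg : DifferentiableAt ℝ g z)
    (hh : DifferentiableAt ℝ h z) :
    wirtZbar (fun w => g w - h w) z = wirtZbar g z - wirtZbar h z := by
  unfold wirtZbar; rw [fderiv_fun_sub hg hh]; simp; ring

lemma wirtZ_const (c z : ℂ) : wirtZ (fun _ => c) z = 0 := by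
  unfold wirtZ; simp

lemma wirtZbar_const (c z : ℂ) : wirtZbar (fun _ => c) z = 0 := by
  unfold wirtZbar; simp

lemma wirtZ_mul {g h : ℂ → ℂ} {z : ℂ} (hg : DifferentiableAt ℝ g z)
    (hh : DifferentiableAt ℝ h z) :
    wirtZ (fun w => g w * h w) z = wirtZ g z * h z + g z * wirtZ h z := by
  unfold wirtZ; rw [fderiv_fun_mul hg hh]; simp [smul_eq_mul]; ring

lemma wirtZbar_mul {g h : ℂ → ℂ} {z : ℂ} (hg : DifferentiableAt ℝ g z)
    (hh : DifferentiableAt ℝ h z) :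
    wirtZbar (fun w => g w * h w) z = wirtZbar g z * h z + g z * wirtZbar h z := by
  unfold wirtZbar; rw [fderiv_fun_mul hg hh]; simp [smul_eq_mul]; ring

lemma wirtZ_const_mul {g : ℂ → ℂ} {z : ℂ} (c : ℂ) (hg : DifferentiableAt ℝ g z) :
    wirtZ (fun w => c * g w) z = c * wirtZ g z := by
  rw [wirtZ_mul (differentiableAt_const c) hg, wirtZ_const]; ring

lemma wirtZbar_const_mul {g : ℂ → ℂ} {z : ℂ} (c : ℂ) (hg : DifferentiableAt ℝ g z) :
    wirtZbar (fun w => c * g w) z = c * wirtZbar g z := by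
  rw [wirtZbar_mul (differentiableAt_const c) hg, wirtZbar_const]; ring

lemma fderiv_conj_comp {g : ℂ → ℂ} {z : ℂ} (hg : DifferentiableAt ℝ g z) (v : ℂ) :
    fderiv ℝ (fun w => (starRingEnd ℂ) (g w)) z v = (starRingEnd ℂ) (fderiv ℝ g z v) := by
  have : fderiv ℝ (fun w => (starRingEnd ℂ) (g w)) z
      = (Complex.conjCLE.toContinuousLinearMap).comp (fderiv ℝ g z) := by
    apply HasFDerivAt.fderiv
    exact (Complex.conjCLE.toContinuousLinearMap.hasFDerivAt).comp z hg.hasFDerivAt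
  rw [this]; rfl

lemma wirtZ_conj {g : ℂ → ℂ} {z : ℂ} (hg : DifferentiableAt ℝ g z) :
    wirtZ (fun w => (starRingEnd ℂ) (g w)) z = (starRingEnd ℂ) (wirtZbar g z) := by
  unfold wirtZ wirtZbar
  rw [fderiv_conj_comp hg, fderiv_conj_comp hg]
  simp only [map_mul, map_add, map_sub, map_one, map_div₀, map_ofNat, Complex.conj_I]
  ring

lemma wirtZbar_conj {g : ℂ → ℂ} {z : ℂ} (hg : DifferentiableAt ℝ g z) :
    wirtZbar (fun w => (starRingEnd ℂ) (g w)) z = (starRingEnd ℂ) (wirtZ g z) := by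
  unfold wirtZ wirtZbar
  rw [fderiv_conj_comp hg, fderiv_conj_comp hg]
  simp only [map_mul, map_add, map_sub, map_one, map_div₀, map_ofNat, Complex.conj_I]
  ring

lemma wirtZ_sum {ι : Type*} (s : Finset ι) {g : ι → ℂ → ℂ} {z : ℂ}
    (hg : ∀ i ∈ s, DifferentiableAt ℝ (g i) z) :
    wirtZ (fun w => ∑ i ∈ s, g i w) z = ∑ i ∈ s, wirtZ (g i) z := by
  unfold wirtZ
  rw [fderiv_fun_sum hg]
  simp only [ContinuousLinearMap.coe_sum', Finset.sum_apply, Finset.mul_sum,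
    Finset.sum_sub_distrib]
  rw [← Finset.sum_sub_distrib, Finset.mul_sum]

lemma wirtZbar_sum {ι : Type*} (s : Finset ι) {g : ι → ℂ → ℂ} {z : ℂ}
    (hg : ∀ i ∈ s, DifferentiableAt ℝ (g i) z) :
    wirtZbar (fun w => ∑ i ∈ s, g i w) z = ∑ i ∈ s, wirtZbar (g i) z := by
  unfold wirtZbar
  rw [fderiv_fun_sum hg]
  simp only [ContinuousLinearMap.coe_sum', Finset.sum_apply, Finset.mul_sum,
    Finset.sum_add_distrib]
  rw [← Finset.sum_add_distrib, Finset.mul_sum]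

lemma fderiv_wirt_apply {g : ℂ → ℂ} (hg : SM g) (z u v : ℂ) :
    fderiv ℝ (fun w => fderiv ℝ g w u) z v = fderiv ℝ (fderiv ℝ g) z v u := by
  rw [fderiv_clm_apply (hg.fderivSM.differentiable (by simp) z)
    (differentiableAt_const u)]
  simp

lemma wirt_comm {g : ℂ → ℂ} (hg : SM g) (z : ℂ) :
    wirtZbar (wirtZ g) z = wirtZ (wirtZbar g) z := by
  have hsymm : IsSymmSndFDerivAt ℝ g z :=
    hg.contDiffAt.isSymmSndFDerivAt (by simp; exact WithTop.coe_le_coe.2 le_top)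
  have hd : ∀ u : ℂ, DifferentiableAt ℝ (fun w => fderiv ℝ g w u) z := by
    intro u
    exact ((hg.fderivSM.clm_apply contDiff_const).differentiable
      (by simp)) z
  have e1 : ∀ u v : ℂ, fderiv ℝ (fun w => fderiv ℝ g w u) z v
      = fderiv ℝ (fderiv ℝ g) z v u := fun u v => fderiv_wirt_apply hg z u v
  unfold wirtZbar wirtZ
  have D1 : ∀ v : ℂ, fderiv ℝ (fun w =>
      (1 / 2 : ℂ) * (fderiv ℝ g w 1 - Complex.I * fderiv ℝ g w Complex.I)) z v
      = (1/2 : ℂ) * (fderiv ℝ (fderiv ℝ g) z v 1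
        - Complex.I * fderiv ℝ (fderiv ℝ g) z v Complex.I) := by
    intro v
    have h1 : DifferentiableAt ℝ (fun w => fderiv ℝ g w 1 -
        Complex.I * fderiv ℝ g w Complex.I) z := (hd 1).sub ((hd I).const_mul _)
    rw [show (fun w => (1 / 2 : ℂ) * (fderiv ℝ g w 1 - Complex.I * fderiv ℝ g w Complex.I))
        = (fun w => (1 / 2 : ℂ) * ((fun w => fderiv ℝ g w 1) w -
            Complex.I * (fun w => fderiv ℝ g w Complex.I) w)) from rfl]
    rw [fderiv_const_mul h1, fderiv_fun_sub (hd 1) ((hd I).const_mul _),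
      fderiv_const_mul (hd I)]
    simp only [ContinuousLinearMap.coe_smul', ContinuousLinearMap.coe_sub',
      ContinuousLinearMap.coe_add', Pi.smul_apply, Pi.sub_apply, Pi.add_apply,
      smul_eq_mul, e1]
  have D2 : ∀ v : ℂ, fderiv ℝ (fun w =>
      (1 / 2 : ℂ) * (fderiv ℝ g w 1 + Complex.I * fderiv ℝ g w Complex.I)) z v
      = (1/2 : ℂ) * (fderiv ℝ (fderiv ℝ g) z v 1
        + Complex.I * fderiv ℝ (fderiv ℝ g) z v Complex.I) := by
    intro v
    have h1 : DifferentiableAt ℝ (fun w => fderiv ℝ g w 1 +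
        Complex.I * fderiv ℝ g w Complex.I) z := (hd 1).add ((hd I).const_mul _)
    rw [show (fun w => (1 / 2 : ℂ) * (fderiv ℝ g w 1 + Complex.I * fderiv ℝ g w Complex.I))
        = (fun w => (1 / 2 : ℂ) * ((fun w => fderiv ℝ g w 1) w +
            Complex.I * (fun w => fderiv ℝ g w Complex.I) w)) from rfl]
    rw [fderiv_const_mul h1, fderiv_fun_add (hd 1) ((hd I).const_mul _),
      fderiv_const_mul (hd I)]
    simp only [ContinuousLinearMap.coe_smul', ContinuousLinearMap.coe_sub',
      ContinuousLinearMap.coe_add', Pi.smul_apply, Pi.sub_apply, Pi.add_apply,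
      smul_eq_mul, e1]
  rw [D1, D1, D2, D2]
  have := hsymm 1 I
  ring_nf
  rw [this]
  ring

lemma SM_ofReal {h : ℂ → ℝ} (hh : ContDiff ℝ ((⊤ : ℕ∞) : WithTop ℕ∞) h) :
    SM (fun w => ((h w : ℝ) : ℂ)) :=
  Complex.ofRealCLM.contDiff.comp hh

lemma diffAt_ofReal {h : ℂ → ℝ} {z : ℂ} (hh : DifferentiableAt ℝ h z) :
    DifferentiableAt ℝ (fun w => ((h w : ℝ) : ℂ)) z :=
  (Complex.ofRealCLM.differentiable.differentiableAt).comp z hh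

lemma fderiv_ofReal_comp {h : ℂ → ℝ} {z : ℂ} (hh : DifferentiableAt ℝ h z) (v : ℂ) :
    fderiv ℝ (fun w => ((h w : ℝ) : ℂ)) z v = ((fderiv ℝ h z v : ℝ) : ℂ) := by
  have h2 : HasFDerivAt (fun w => ((h w : ℝ) : ℂ))
      (Complex.ofRealCLM.comp (fderiv ℝ h z)) z :=
    Complex.ofRealCLM.hasFDerivAt.comp z hh.hasFDerivAt
  rw [h2.fderiv]; rfl

lemma wirtZbar_ofReal {h : ℂ → ℝ} {z : ℂ} (hh : DifferentiableAt ℝ h z) :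
    wirtZbar (fun w => ((h w : ℝ) : ℂ)) z
      = (starRingEnd ℂ) (wirtZ (fun w => ((h w : ℝ) : ℂ)) z) := by
  have e : (fun w => ((h w : ℝ) : ℂ)) = fun w => (starRingEnd ℂ) ((h w : ℝ) : ℂ) := by
    funext w; simp
  conv_lhs => rw [e]
  exact wirtZbar_conj (diffAt_ofReal hh)

lemma wirtZ_exp (c : ℝ) {ρ : ℂ → ℝ} {z : ℂ} (hρ : DifferentiableAt ℝ ρ z) :
    wirtZ (fun w => ((Real.exp (c * ρ w) : ℝ) : ℂ)) z
      = (c : ℂ) * wirtZ (fun w => ((ρ w : ℝ) : ℂ)) z * ((Real.exp (c * ρ z) : ℝ) : ℂ) := by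
  have hcd : DifferentiableAt ℝ (fun w => c * ρ w) z := hρ.const_mul c
  have hd : DifferentiableAt ℝ (fun w => Real.exp (c * ρ w)) z := hcd.exp
  have key : ∀ v : ℂ, fderiv ℝ (fun w => Real.exp (c * ρ w)) z v
      = Real.exp (c * ρ z) * (c * fderiv ℝ ρ z v) := by
    intro v
    have h1 : HasFDerivAt (fun w => c * ρ w) (c • fderiv ℝ ρ z) z := by
      simpa using (hρ.hasFDerivAt.fun_const_smul c)
    have h2 : HasFDerivAt (fun w => Real.exp (c * ρ w))
        (Real.exp (c * ρ z) • c • fderiv ℝ ρ z) z :=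
      by have := (Real.hasDerivAt_exp (c * ρ z)).comp_hasFDerivAt z h1; exact this
    rw [h2.fderiv]
    simp [smul_eq_mul]
    try ring
  unfold wirtZ
  rw [fderiv_ofReal_comp hd, fderiv_ofReal_comp hd, fderiv_ofReal_comp hρ,
    fderiv_ofReal_comp hρ, key, key]
  push_cast
  ring

lemma pairC_comm {m : ℕ} (u v : Fin m → ℂ) : pairC u v = pairC v u := by
  unfold pairC; exact Finset.sum_congr rfl fun i _ => mul_comm _ _

lemma pairC_conj_conj {m : ℕ} (u v : Fin m → ℂ) :
    pairC (conjV u) (conjV v) = (starRingEnd ℂ) (pairC u v) := by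
  unfold pairC conjV; rw [map_sum]; exact Finset.sum_congr rfl fun i _ => (map_mul _ _ _).symm

lemma pairC_smul_left {m : ℕ} (c : ℂ) (u v : Fin m → ℂ) :
    pairC (fun i => c * u i) v = c * pairC u v := by
  unfold pairC; rw [Finset.mul_sum]; exact Finset.sum_congr rfl fun i _ => by ring

lemma pairC_zero {m : ℕ} (v : Fin m → ℂ) : pairC (fun _ => (0:ℂ)) v = 0 := by
  unfold pairC; simp

lemma wirtZ_pair {m : ℕ} {g h : ℂ → Fin m → ℂ} {z : ℂ}
    (hg : ∀ i, SM (fun w => g w i)) (hh : ∀ i, SM (fun w => h w i)) :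
    wirtZ (fun w => pairC (g w) (h w)) z = pairC (WZ g z) (h z) + pairC (g z) (WZ h z) := by
  unfold pairC
  rw [wirtZ_sum Finset.univ (fun i _ => ((hg i).mul' (hh i)).dAt z)]
  have : ∀ i, wirtZ (fun w => g w i * h w i) z
      = WZ g z i * h z i + g z i * WZ h z i := fun i =>
    wirtZ_mul ((hg i).dAt z) ((hh i).dAt z)
  rw [Finset.sum_congr rfl fun i _ => this i, Finset.sum_add_distrib]

lemma wirtZbar_pair {m : ℕ} {g h : ℂ → Fin m → ℂ} {z : ℂ}
    (hg : ∀ i, SM (fun w => g w i)) (hh : ∀ i, SM (fun w => h w i)) :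
    wirtZbar (fun w => pairC (g w) (h w)) z = pairC (WZb g z) (h z) + pairC (g z) (WZb h z) := by
  unfold pairC
  rw [wirtZbar_sum Finset.univ (fun i _ => ((hg i).mul' (hh i)).dAt z)]
  have : ∀ i, wirtZbar (fun w => g w i * h w i) z
      = WZb g z i * h z i + g z i * WZb h z i := fun i =>
    wirtZbar_mul ((hg i).dAt z) ((hh i).dAt z)
  rw [Finset.sum_congr rfl fun i _ => this i, Finset.sum_add_distrib]

section Main
variable {m : ℕ} {f : ℂ → Fin m → ℝ} {ρ : ℂ → ℝ}

lemma smF (hf : IsConfMinImm f ρ) (i : Fin m) : SM (fun w => Fc f w i) :=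
  SM_ofReal (contDiff_pi.1 (hf.1.of_le (by simp)) i)

lemma smFz (hf : IsConfMinImm f ρ) (i : Fin m) : SM (fun w => WZ (Fc f) w i) :=
  (smF hf i).wirtZ

lemma smFzb (hf : IsConfMinImm f ρ) (i : Fin m) : SM (fun w => WZb (Fc f) w i) :=
  (smF hf i).wirtZbar

lemma smρc (hf : IsConfMinImm f ρ) : SM (fun w => ((ρ w : ℝ) : ℂ)) :=
  SM_ofReal (hf.2.1.of_le (by simp))

lemma smdZ (hf : IsConfMinImm f ρ) : SM (dZ ρ) := (smρc hf).wirtZ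

lemma smExp (hf : IsConfMinImm f ρ) (c : ℝ) :
    SM (fun w => ((Real.exp (c * ρ w) : ℝ) : ℂ)) :=
  SM_ofReal (Real.contDiff_exp.comp (contDiff_const.mul (hf.2.1.of_le (by simp))))

lemma smFzz (hf : IsConfMinImm f ρ) (i : Fin m) : SM (fun w => WZ (WZ (Fc f)) w i) :=
  (smFz hf i).wirtZ

lemma smHopf (hf : IsConfMinImm f ρ) (i : Fin m) : SM (fun w => Hopf f ρ w i) := by
  unfold Hopf
  exact (smFzz hf i).sub ((contDiff_const.mul (smdZ hf)).mul (smFz hf i))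

lemma smHopfConj (hf : IsConfMinImm f ρ) (i : Fin m) :
    SM (fun w => conjV (Hopf f ρ w) i) := (smHopf hf i).conj'

lemma smA (hf : IsConfMinImm f ρ) : SM (fun w => pairC (Hopf f ρ w) (Hopf f ρ w)) := by
  unfold pairC
  exact ContDiff.sum fun i _ => (smHopf hf i).mul' (smHopf hf i)

lemma smB (hf : IsConfMinImm f ρ) : SM (fun w => pairC (Hopf f ρ w) (conjV (Hopf f ρ w))) := by
  unfold pairC
  exact ContDiff.sum fun i _ => (smHopf hf i).mul' (smHopfConj hf i)

lemma hFzb_conj (hf : IsConfMinImm f ρ) (z : ℂ) (i : Fin m) :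
    WZb (Fc f) z i = (starRingEnd ℂ) (WZ (Fc f) z i) :=
  wirtZbar_ofReal ((contDiff_pi.1 (hf.1.of_le (by simp)) i).differentiable one_ne_zero z)

lemma hρbar (hf : IsConfMinImm f ρ) (z : ℂ) :
    wirtZbar (fun w => ((ρ w : ℝ) : ℂ)) z = (starRingEnd ℂ) (dZ ρ z) :=
  wirtZbar_ofReal ((hf.2.1.of_le (by simp)).differentiable one_ne_zero z)

lemma hexpZ (hf : IsConfMinImm f ρ) (c : ℝ) (z : ℂ) :
    wirtZ (fun w => ((Real.exp (c * ρ w) : ℝ) : ℂ)) z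
      = (c : ℂ) * dZ ρ z * ((Real.exp (c * ρ z) : ℝ) : ℂ) :=
  wirtZ_exp c ((hf.2.1.of_le (by simp)).differentiable one_ne_zero z)

lemma hexpZb (hf : IsConfMinImm f ρ) (c : ℝ) (z : ℂ) :
    wirtZbar (fun w => ((Real.exp (c * ρ w) : ℝ) : ℂ)) z
      = (c : ℂ) * (starRingEnd ℂ) (dZ ρ z) * ((Real.exp (c * ρ z) : ℝ) : ℂ) := by
  have hd : DifferentiableAt ℝ (fun w => Real.exp (c * ρ w)) z :=
    (((hf.2.1.of_le (by simp)).differentiable one_ne_zero z).const_mul c).exp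
  rw [wirtZbar_ofReal hd, hexpZ hf c z]
  simp only [map_mul, Complex.conj_ofReal]

end Main

section Main2
variable {m : ℕ} {f : ℂ → Fin m → ℝ} {ρ : ℂ → ℝ}

lemma hFF (hf : IsConfMinImm f ρ) (z : ℂ) : pairC (Fc f z) (Fc f z) = 1 := by
  unfold pairC
  calc ∑ i, Fc f z i * Fc f z i = ((∑ i, (f z i)^2 : ℝ) : ℂ) := by
        push_cast [Fc, cV]
        exact Finset.sum_congr rfl fun i _ => by ring
    _ = 1 := by rw [hf.2.2.1 z]; norm_num

lemma hFzF (hf : IsConfMinImm f ρ) (z : ℂ) : pairC (WZ (Fc f) z) (Fc f z) = 0 := by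
  have hder : wirtZ (fun w => pairC (Fc f w) (Fc f w)) z = 0 := by
    have e : (fun w => pairC (Fc f w) (Fc f w)) = fun _ => (1:ℂ) := funext fun w => hFF hf w
    rw [e, wirtZ_const]
  rw [wirtZ_pair (smF hf) (smF hf), pairC_comm (Fc f z)] at hder
  linear_combination hder / 2

lemma hFzbF (hf : IsConfMinImm f ρ) (z : ℂ) : pairC (WZb (Fc f) z) (Fc f z) = 0 := by
  unfold pairC
  have e : ∀ i, WZb (Fc f) z i * Fc f z i
      = (starRingEnd ℂ) (WZ (Fc f) z i * Fc f z i) := by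
    intro i
    rw [hFzb_conj hf, map_mul]
    congr 1
    simp [Fc, cV, Complex.conj_ofReal]
  rw [Finset.sum_congr rfl fun i _ => e i, ← map_sum]
  have h := hFzF hf z
  unfold pairC at h
  rw [h]; simp

lemma hFzzF (hf : IsConfMinImm f ρ) (z : ℂ) : pairC (WZ (WZ (Fc f)) z) (Fc f z) = 0 := by
  have hder : wirtZ (fun w => pairC (WZ (Fc f) w) (Fc f w)) z = 0 := by
    have e : (fun w => pairC (WZ (Fc f) w) (Fc f w)) = fun _ => (0:ℂ) :=
      funext fun w => hFzF hf w
    rw [e, wirtZ_const]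
  rw [wirtZ_pair (smFz hf) (smF hf)] at hder
  have h2 := hf.2.2.2.1 z
  linear_combination hder - h2

lemma hFzzFz (hf : IsConfMinImm f ρ) (z : ℂ) :
    pairC (WZ (WZ (Fc f)) z) (WZ (Fc f) z) = 0 := by
  have hder : wirtZ (fun w => pairC (WZ (Fc f) w) (WZ (Fc f) w)) z = 0 := by
    have e : (fun w => pairC (WZ (Fc f) w) (WZ (Fc f) w)) = fun _ => (0:ℂ) :=
      funext fun w => hf.2.2.2.1 w
    rw [e, wirtZ_const]
  rw [wirtZ_pair (smFz hf) (smFz hf), pairC_comm (WZ (Fc f) z) (WZ (WZ (Fc f)) z)] at hder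
  linear_combination hder / 2

lemma conformal2' (hf : IsConfMinImm f ρ) (z : ℂ) :
    pairC (WZ (Fc f) z) (WZb (Fc f) z) = (1/2 : ℂ) * ((Real.exp (2 * ρ z) : ℝ) : ℂ) := by
  have e : conjV (WZ (Fc f) z) = WZb (Fc f) z :=
    funext fun i => (hFzb_conj hf z i).symm
  rw [← e]
  exact hf.2.2.2.2.1 z

lemma hcomm (hf : IsConfMinImm f ρ) (z : ℂ) (i : Fin m) :
    WZ (WZb (Fc f)) z i = WZb (WZ (Fc f)) z i :=
  (wirt_comm (smF hf i) z).symm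

lemma hFzWZWZb (hf : IsConfMinImm f ρ) (z : ℂ) :
    pairC (WZ (Fc f) z) (WZ (WZb (Fc f)) z) = 0 := by
  unfold pairC
  have e : ∀ i, WZ (Fc f) z i * WZ (WZb (Fc f)) z i
      = (-(1/2:ℂ) * ((Real.exp (2 * ρ z) : ℝ) : ℂ)) * (WZ (Fc f) z i * Fc f z i) := by
    intro i
    rw [hcomm hf z i, hf.2.2.2.2.2 z i]
    ring
  rw [Finset.sum_congr rfl fun i _ => e i, ← Finset.mul_sum]
  have h := hFzF hf z
  unfold pairC at h
  rw [h, mul_zero]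

lemma hFzzFzb (hf : IsConfMinImm f ρ) (z : ℂ) :
    pairC (WZ (WZ (Fc f)) z) (WZb (Fc f) z)
      = dZ ρ z * ((Real.exp (2 * ρ z) : ℝ) : ℂ) := by
  have hder : wirtZ (fun w => pairC (WZ (Fc f) w) (WZb (Fc f) w)) z
      = dZ ρ z * ((Real.exp (2 * ρ z) : ℝ) : ℂ) := by
    have e : (fun w => pairC (WZ (Fc f) w) (WZb (Fc f) w))
        = fun w => (1/2:ℂ) * ((Real.exp (2 * ρ w) : ℝ) : ℂ) :=
      funext fun w => conformal2' hf w
    rw [e, wirtZ_const_mul _ ((smExp hf 2).dAt z), hexpZ hf 2 z]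
    push_cast
    ring
  rw [wirtZ_pair (smFz hf) (smFzb hf)] at hder
  have h2 := hFzWZWZb hf z
  linear_combination hder - h2

end Main2

section Main3
variable {m : ℕ} {f : ℂ → Fin m → ℝ} {ρ : ℂ → ℝ}

lemma pairC_hopf_left (z : ℂ) (v : Fin m → ℂ) : pairC (Hopf f ρ z) v
    = pairC (WZ (WZ (Fc f)) z) v - 2 * dZ ρ z * pairC (WZ (Fc f) z) v := by
  unfold pairC Hopf
  simp only [sub_mul]
  rw [Finset.sum_sub_distrib]
  congr 1
  rw [Finset.mul_sum]
  exact Finset.sum_congr rfl fun i _ => by ring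

lemma normalN1 (hf : IsConfMinImm f ρ) (z : ℂ) : pairC (Hopf f ρ z) (Fc f z) = 0 := by
  rw [pairC_hopf_left, hFzzF hf, hFzF hf]; ring

lemma normalN2 (hf : IsConfMinImm f ρ) (z : ℂ) : pairC (Hopf f ρ z) (WZ (Fc f) z) = 0 := by
  rw [pairC_hopf_left, hFzzFz hf, hf.2.2.2.1 z]; ring

lemma normalN3 (hf : IsConfMinImm f ρ) (z : ℂ) : pairC (Hopf f ρ z) (WZb (Fc f) z) = 0 := by
  rw [pairC_hopf_left, hFzzFzb hf, conformal2' hf]; ring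

lemma hopf_is_normal (hf : IsConfMinImm f ρ) : IsNormalField f (Hopf f ρ) :=
  fun z => ⟨normalN1 hf z, normalN2 hf z, normalN3 hf z⟩

/-- `∂_z̄ F_{zz}` -/
lemma hFzzzb (hf : IsConfMinImm f ρ) (z : ℂ) (i : Fin m) :
    WZb (WZ (WZ (Fc f))) z i
      = -(dZ ρ z) * ((Real.exp (2 * ρ z) : ℝ) : ℂ) * Fc f z i
        - (1/2 : ℂ) * ((Real.exp (2 * ρ z) : ℝ) : ℂ) * WZ (Fc f) z i := by
  have step1 : WZb (WZ (WZ (Fc f))) z i = WZ (WZb (WZ (Fc f))) z i :=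
    wirt_comm (smFz hf i) z
  rw [step1]
  have e : (fun w => WZb (WZ (Fc f)) w i)
      = fun w => (-(1/2:ℂ)) * (((Real.exp (2 * ρ w) : ℝ) : ℂ) * Fc f w i) := by
    funext w
    rw [hf.2.2.2.2.2 w i]; ring
  show wirtZ (fun w => WZb (WZ (Fc f)) w i) z = _
  rw [e, wirtZ_const_mul _ (((smExp hf 2).mul' (smF hf i)).dAt z),
    wirtZ_mul ((smExp hf 2).dAt z) ((smF hf i).dAt z), hexpZ hf 2 z]
  have h2 : wirtZ (fun w => Fc f w i) z = WZ (Fc f) z i := rfl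
  rw [h2]
  push_cast
  ring

/-- `∂_z̄ Ω` in terms of `τ = ρ_{z z̄}` -/
lemma sm2dZ (hf : IsConfMinImm f ρ) : SM (fun w => 2 * dZ ρ w) :=
  contDiff_const.mul (smdZ hf)

lemma hOmZb (hf : IsConfMinImm f ρ) (z : ℂ) (i : Fin m) :
    WZb (Hopf f ρ) z i
      = -((1/2 : ℂ) * ((Real.exp (2 * ρ z) : ℝ) : ℂ) + 2 * wirtZbar (dZ ρ) z)
          * WZ (Fc f) z i := by
  have e : (fun w => Hopf f ρ w i)
      = fun w => WZ (WZ (Fc f)) w i - (2 * dZ ρ w) * WZ (Fc f) w i := by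
    funext w; unfold Hopf; ring
  show wirtZbar (fun w => Hopf f ρ w i) z = _
  rw [e, wirtZbar_sub ((smFzz hf i).dAt z) (((sm2dZ hf).mul' (smFz hf i)).dAt z),
    wirtZbar_mul ((sm2dZ hf).dAt z) ((smFz hf i).dAt z),
    wirtZbar_const_mul _ ((smdZ hf).dAt z)]
  have h1 : wirtZbar (fun w => WZ (WZ (Fc f)) w i) z = WZb (WZ (WZ (Fc f))) z i := rfl
  have h2 : wirtZbar (fun w => WZ (Fc f) w i) z = WZb (WZ (Fc f)) z i := rfl
  rw [h1, h2, hFzzzb hf z i, hf.2.2.2.2.2 z i]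
  ring

end Main3

lemma conjV_conjV {m : ℕ} (u : Fin m → ℂ) : conjV (conjV u) = u :=
  funext fun i => Complex.conj_conj _

lemma sum_lin2 {m : ℕ} (c d : ℂ) (u v w : Fin m → ℂ) :
    ∑ i, (c * u i + d * v i) * w i = c * pairC u w + d * pairC v w := by
  unfold pairC
  rw [Finset.mul_sum, Finset.mul_sum, ← Finset.sum_add_distrib]
  exact Finset.sum_congr rfl fun i _ => by ring

lemma sum_expand {m : ℕ} (c : ℂ) (u v : Fin m → ℂ) :
    ∑ i, (u i + c * v i) * (starRingEnd ℂ) (u i + c * v i)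
      = pairC u (conjV u) + (starRingEnd ℂ) c * pairC u (conjV v)
        + c * pairC v (conjV u) + c * (starRingEnd ℂ) c * pairC v (conjV v) := by
  unfold pairC conjV
  simp only [map_add, map_mul]
  rw [Finset.mul_sum, Finset.mul_sum, Finset.mul_sum]
  rw [← Finset.sum_add_distrib, ← Finset.sum_add_distrib, ← Finset.sum_add_distrib]
  exact Finset.sum_congr rfl fun i _ => by ring

section Main4
variable {m : ℕ} {f : ℂ → Fin m → ℝ} {ρ : ℂ → ℝ}

lemma pairC_conjV_hopf_Fz (hf : IsConfMinImm f ρ) (z : ℂ) :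
    pairC (WZ (Fc f) z) (conjV (Hopf f ρ z)) = 0 := by
  have h : pairC (conjV (WZ (Fc f) z)) (conjV (conjV (Hopf f ρ z)))
      = (starRingEnd ℂ) (pairC (WZ (Fc f) z) (conjV (Hopf f ρ z))) :=
    pairC_conj_conj _ _
  rw [conjV_conjV] at h
  have e : conjV (WZ (Fc f) z) = WZb (Fc f) z := funext fun i => (hFzb_conj hf z i).symm
  rw [e, pairC_comm, normalN3 hf z] at h
  have := h.symm
  rwa [map_eq_zero] at this

lemma hWZbWZb (hf : IsConfMinImm f ρ) (z : ℂ) (i : Fin m) :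
    WZb (WZb (Fc f)) z i = (starRingEnd ℂ) (WZ (WZ (Fc f)) z i) := by
  have e : (fun w => WZb (Fc f) w i) = fun w => (starRingEnd ℂ) (WZ (Fc f) w i) :=
    funext fun w => hFzb_conj hf w i
  show wirtZbar (fun w => WZb (Fc f) w i) z = _
  rw [e, wirtZbar_conj ((smFz hf i).dAt z)]
  rfl

lemma gauss (hf : IsConfMinImm f ρ) (z : ℂ) :
    pairC (Hopf f ρ z) (conjV (Hopf f ρ z))
      = (1/4 : ℂ) * ((Real.exp (2 * ρ z) : ℝ) : ℂ) * ((Real.exp (2 * ρ z) : ℝ) : ℂ)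
        + wirtZbar (dZ ρ) z * ((Real.exp (2 * ρ z) : ℝ) : ℂ) := by
  have hder : wirtZbar (fun w => pairC (WZ (WZ (Fc f)) w) (WZb (Fc f) w)) z
      = wirtZbar (dZ ρ) z * ((Real.exp (2 * ρ z) : ℝ) : ℂ)
        + dZ ρ z * (2 * (starRingEnd ℂ) (dZ ρ z) * ((Real.exp (2 * ρ z) : ℝ) : ℂ)) := by
    have e : (fun w => pairC (WZ (WZ (Fc f)) w) (WZb (Fc f) w))
        = fun w => dZ ρ w * ((Real.exp (2 * ρ w) : ℝ) : ℂ) :=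
      funext fun w => hFzzFzb hf w
    rw [e, wirtZbar_mul ((smdZ hf).dAt z) ((smExp hf 2).dAt z), hexpZb hf 2 z]
    simp only [Complex.ofReal_ofNat]
    try ring
  rw [wirtZbar_pair (smFzz hf) (smFzb hf)] at hder
  have t1 : pairC (WZb (WZ (WZ (Fc f))) z) (WZb (Fc f) z)
      = -(1/4:ℂ) * ((Real.exp (2 * ρ z) : ℝ) : ℂ) * ((Real.exp (2 * ρ z) : ℝ) : ℂ) := by
    unfold pairC
    have ei : ∀ i, WZb (WZ (WZ (Fc f))) z i * WZb (Fc f) z i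
        = ((-(dZ ρ z) * ((Real.exp (2 * ρ z) : ℝ) : ℂ)) * Fc f z i
            + (-(1/2:ℂ) * ((Real.exp (2 * ρ z) : ℝ) : ℂ)) * WZ (Fc f) z i)
            * WZb (Fc f) z i := by
      intro i; rw [hFzzzb hf z i]; ring
    rw [Finset.sum_congr rfl fun i _ => ei i, sum_lin2]
    have c1 : pairC (Fc f z) (WZb (Fc f) z) = 0 := by
      rw [pairC_comm]; exact hFzbF hf z
    rw [c1, conformal2' hf]
    ring
  have t2 : pairC (WZ (WZ (Fc f)) z) (WZb (WZb (Fc f)) z)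
      = pairC (Hopf f ρ z) (conjV (Hopf f ρ z))
        + 2 * dZ ρ z * (starRingEnd ℂ) (dZ ρ z) * ((Real.exp (2 * ρ z) : ℝ) : ℂ) := by
    unfold pairC
    have ei : ∀ i, WZ (WZ (Fc f)) z i * WZb (WZb (Fc f)) z i
        = (Hopf f ρ z i + (2 * dZ ρ z) * WZ (Fc f) z i)
            * (starRingEnd ℂ) (Hopf f ρ z i + (2 * dZ ρ z) * WZ (Fc f) z i) := by
      intro i
      rw [hWZbWZb hf z i]
      have : WZ (WZ (Fc f)) z i = Hopf f ρ z i + (2 * dZ ρ z) * WZ (Fc f) z i := by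
        unfold Hopf; ring
      rw [this]
    rw [Finset.sum_congr rfl fun i _ => ei i, sum_expand]
    have n3 : pairC (Hopf f ρ z) (conjV (WZ (Fc f) z)) = 0 := by
      have e : conjV (WZ (Fc f) z) = WZb (Fc f) z :=
        funext fun i => (hFzb_conj hf z i).symm
      rw [e]; exact normalN3 hf z
    have n4 := pairC_conjV_hopf_Fz hf z
    have c2 := hf.2.2.2.2.1 z
    rw [n3, n4, c2]
    simp only [map_mul, map_ofNat]
    unfold pairC
    ring
  rw [t1, t2] at hder
  linear_combination hder

lemma codazzi (hf : IsConfMinImm f ρ) (z : ℂ) (i : Fin m) :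
    WZb (Hopf f ρ) z i
      = -2 * ((Real.exp (-2 * ρ z) : ℝ) : ℂ)
          * pairC (Hopf f ρ z) (conjV (Hopf f ρ z)) * WZ (Fc f) z i := by
  rw [hOmZb hf z i, gauss hf z]
  have he : ((Real.exp (-2 * ρ z) : ℝ) : ℂ) * ((Real.exp (2 * ρ z) : ℝ) : ℂ) = 1 := by
    rw [← Complex.ofReal_mul, ← Real.exp_add]
    norm_num
  set E2 : ℂ := ((Real.exp (2 * ρ z) : ℝ) : ℂ)
  set Em2 : ℂ := ((Real.exp (-2 * ρ z) : ℝ) : ℂ)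
  set τ : ℂ := wirtZbar (dZ ρ) z
  set X : ℂ := WZ (Fc f) z i
  linear_combination ((1/2 : ℂ) * E2 + 2 * τ) * X * he

lemma NZb_hopf_zero (hf : IsConfMinImm f ρ) (z : ℂ) (i : Fin m) :
    NZb f ρ (Hopf f ρ) z i = 0 := by
  show WZb (Hopf f ρ) z i + 2 * ((Real.exp (-2 * ρ z) : ℝ) : ℂ)
      * pairC (Hopf f ρ z) (conjV (Hopf f ρ z)) * WZ (Fc f) z i = 0
  rw [codazzi hf z i]
  ring

end Main4

section Main5
variable {m : ℕ} {f : ℂ → Fin m → ℝ} {ρ : ℂ → ℝ}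

lemma pairC_WZbHopf_left (hf : IsConfMinImm f ρ) (z : ℂ) (v : Fin m → ℂ) :
    pairC (WZb (Hopf f ρ) z) v
      = -2 * ((Real.exp (-2 * ρ z) : ℝ) : ℂ)
          * pairC (Hopf f ρ z) (conjV (Hopf f ρ z)) * pairC (WZ (Fc f) z) v := by
  unfold pairC
  calc ∑ i, WZb (Hopf f ρ) z i * v i
      = ∑ i, (-2 * ((Real.exp (-2 * ρ z) : ℝ) : ℂ)
          * (∑ j, Hopf f ρ z j * conjV (Hopf f ρ z) j)) * (WZ (Fc f) z i * v i) := by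
        refine Finset.sum_congr rfl fun i _ => ?_
        rw [codazzi hf z i]
        unfold pairC
        ring
    _ = _ := by rw [← Finset.mul_sum]; try ring

lemma haZb (hf : IsConfMinImm f ρ) (z : ℂ) :
    wirtZbar (fun w => pairC (Hopf f ρ w) (Hopf f ρ w)) z = 0 := by
  rw [wirtZbar_pair (smHopf hf) (smHopf hf)]
  have h1 : pairC (WZb (Hopf f ρ) z) (Hopf f ρ z) = 0 := by
    rw [pairC_WZbHopf_left hf z, pairC_comm (WZ (Fc f) z), normalN2 hf z]; ring
  rw [h1, pairC_comm (Hopf f ρ z), h1]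
  ring

lemma pairC_Fzb_conjHopf (hf : IsConfMinImm f ρ) (z : ℂ) :
    pairC (WZb (Fc f) z) (conjV (Hopf f ρ z)) = 0 := by
  have e : WZb (Fc f) z = conjV (WZ (Fc f) z) := funext fun i => hFzb_conj hf z i
  rw [e, pairC_conj_conj, pairC_comm, normalN2 hf z, map_zero]

lemma hWZconjHopf (hf : IsConfMinImm f ρ) (z : ℂ) (i : Fin m) :
    WZ (fun w => conjV (Hopf f ρ w)) z i = (starRingEnd ℂ) (WZb (Hopf f ρ) z i) := by
  show wirtZ (fun w => conjV (Hopf f ρ w) i) z = _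
  have e : (fun w => conjV (Hopf f ρ w) i) = fun w => (starRingEnd ℂ) (Hopf f ρ w i) := rfl
  rw [e, wirtZ_conj ((smHopf hf i).dAt z)]
  rfl

lemma pairNZ (hf : IsConfMinImm f ρ) (z : ℂ) :
    pairC (NZ f ρ (Hopf f ρ) z) (conjV (Hopf f ρ z))
      = wirtZ (fun w => pairC (Hopf f ρ w) (conjV (Hopf f ρ w))) z := by
  rw [wirtZ_pair (smHopf hf) (fun i => smHopfConj hf i)]
  have h2 : pairC (Hopf f ρ z) (WZ (fun w => conjV (Hopf f ρ w)) z) = 0 := by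
    unfold pairC
    have ei : ∀ i, Hopf f ρ z i * WZ (fun w => conjV (Hopf f ρ w)) z i
        = ((starRingEnd ℂ) (-2 * ((Real.exp (-2 * ρ z) : ℝ) : ℂ)
            * pairC (Hopf f ρ z) (conjV (Hopf f ρ z))))
          * (Hopf f ρ z i * WZb (Fc f) z i) := by
      intro i
      rw [hWZconjHopf hf z i, codazzi hf z i]
      rw [show (starRingEnd ℂ) (-2 * ((Real.exp (-2 * ρ z) : ℝ) : ℂ)
          * pairC (Hopf f ρ z) (conjV (Hopf f ρ z)) * WZ (Fc f) z i)
        = (starRingEnd ℂ) (-2 * ((Real.exp (-2 * ρ z) : ℝ) : ℂ)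
          * pairC (Hopf f ρ z) (conjV (Hopf f ρ z))) * (starRingEnd ℂ) (WZ (Fc f) z i)
        from map_mul _ _ _]
      rw [← hFzb_conj hf z i]
      ring
    rw [Finset.sum_congr rfl fun i _ => ei i, ← Finset.mul_sum]
    have h3 := normalN3 hf z
    unfold pairC at h3
    rw [h3, mul_zero]
  rw [h2, add_zero]
  -- LHS : pairC (NZ Hopf) (conjV Hopf) = pairC (WZ Hopf) (conjV Hopf)
  have lhs : pairC (NZ f ρ (Hopf f ρ) z) (conjV (Hopf f ρ z))
      = 1 * pairC (WZ (Hopf f ρ) z) (conjV (Hopf f ρ z))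
        + (2 * ((Real.exp (-2 * ρ z) : ℝ) : ℂ) * pairC (Hopf f ρ z) (Hopf f ρ z))
          * pairC (WZb (Fc f) z) (conjV (Hopf f ρ z)) := by
    rw [← sum_lin2]
    unfold NZ pairC
    exact Finset.sum_congr rfl fun i _ => by ring
  rw [lhs, pairC_Fzb_conjHopf hf z]
  ring

end Main5

section Main6
variable {m : ℕ} {f : ℂ → Fin m → ℝ} {ρ : ℂ → ℝ}

lemma hconjFzz (hf : IsConfMinImm f ρ) (z : ℂ) (i : Fin m) :
    (starRingEnd ℂ) (WZ (WZ (Fc f)) z i)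
      = (starRingEnd ℂ) (Hopf f ρ z i) + 2 * (starRingEnd ℂ) (dZ ρ z) * WZb (Fc f) z i := by
  have e : WZ (WZ (Fc f)) z i = Hopf f ρ z i + 2 * dZ ρ z * WZ (Fc f) z i := by
    unfold Hopf; ring
  rw [e, map_add, map_mul, map_mul, map_ofNat, ← hFzb_conj hf z i]

lemma NZbNZ_hopf (hf : IsConfMinImm f ρ) (z : ℂ) (i : Fin m) :
    NZb f ρ (NZ f ρ (Hopf f ρ)) z i
      = 2 * ((Real.exp (-2 * ρ z) : ℝ) : ℂ)
          * (pairC (Hopf f ρ z) (Hopf f ρ z) * (starRingEnd ℂ) (Hopf f ρ z i)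
            - pairC (Hopf f ρ z) (conjV (Hopf f ρ z)) * Hopf f ρ z i) := by
  show WZb (NZ f ρ (Hopf f ρ)) z i
      + 2 * ((Real.exp (-2 * ρ z) : ℝ) : ℂ)
        * pairC (NZ f ρ (Hopf f ρ) z) (conjV (Hopf f ρ z)) * WZ (Fc f) z i = _
  rw [pairNZ hf z]
  -- now compute WZb (NZ Hopf) z i
  have hsplit : WZb (NZ f ρ (Hopf f ρ)) z i
      = wirtZbar (fun w => WZ (Hopf f ρ) w i) z
        + wirtZbar (fun w => 2 * ((Real.exp (-2 * ρ w) : ℝ) : ℂ)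
            * pairC (Hopf f ρ w) (Hopf f ρ w) * WZb (Fc f) w i) z := by
    show wirtZbar (fun w => NZ f ρ (Hopf f ρ) w i) z = _
    have e : (fun w => NZ f ρ (Hopf f ρ) w i)
        = fun w => WZ (Hopf f ρ) w i + (2 * ((Real.exp (-2 * ρ w) : ℝ) : ℂ)
            * pairC (Hopf f ρ w) (Hopf f ρ w) * WZb (Fc f) w i) := rfl
    rw [e, wirtZbar_add
      (show DifferentiableAt ℝ (fun w => WZ (Hopf f ρ) w i) z from (smHopf hf i).wirtZ.dAt z)
      ((SM.mul' (SM.mul' (SM.mul' contDiff_const (smExp hf (-2))) (smA hf)) (smFzb hf i)).dAt z)]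
  have hA : wirtZbar (fun w => WZ (Hopf f ρ) w i) z
      = -2 * (((-2 : ℝ) : ℂ) * dZ ρ z * ((Real.exp (-2 * ρ z) : ℝ) : ℂ)
            * (pairC (Hopf f ρ z) (conjV (Hopf f ρ z)) * WZ (Fc f) z i)
          + ((Real.exp (-2 * ρ z) : ℝ) : ℂ)
            * (wirtZ (fun w => pairC (Hopf f ρ w) (conjV (Hopf f ρ w))) z * WZ (Fc f) z i
              + pairC (Hopf f ρ z) (conjV (Hopf f ρ z))
                * (Hopf f ρ z i + 2 * dZ ρ z * WZ (Fc f) z i))) := by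
    have h1 : wirtZbar (fun w => WZ (Hopf f ρ) w i) z
        = wirtZ (fun w => WZb (Hopf f ρ) w i) z := wirt_comm (smHopf hf i) z
    rw [h1]
    have e : (fun w => WZb (Hopf f ρ) w i)
        = fun w => (-2 : ℂ) * (((Real.exp (-2 * ρ w) : ℝ) : ℂ)
            * (pairC (Hopf f ρ w) (conjV (Hopf f ρ w)) * WZ (Fc f) w i)) := by
      funext w
      rw [codazzi hf w i]
      ring
    rw [e, wirtZ_const_mul _ (((smExp hf (-2)).mul' ((smB hf).mul' (smFz hf i))).dAt z),
      wirtZ_mul ((smExp hf (-2)).dAt z) (((smB hf).mul' (smFz hf i)).dAt z),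
      wirtZ_mul ((smB hf).dAt z) ((smFz hf i).dAt z), hexpZ hf (-2) z]
    have h2 : wirtZ (fun w => WZ (Fc f) w i) z
        = Hopf f ρ z i + 2 * dZ ρ z * WZ (Fc f) z i := by
      show WZ (WZ (Fc f)) z i = _
      unfold Hopf; ring
    rw [h2]
    try ring
  have hB : wirtZbar (fun w => 2 * ((Real.exp (-2 * ρ w) : ℝ) : ℂ)
        * pairC (Hopf f ρ w) (Hopf f ρ w) * WZb (Fc f) w i) z
      = 2 * (((-2 : ℝ) : ℂ) * (starRingEnd ℂ) (dZ ρ z) * ((Real.exp (-2 * ρ z) : ℝ) : ℂ)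
            * (pairC (Hopf f ρ z) (Hopf f ρ z) * WZb (Fc f) z i)
          + ((Real.exp (-2 * ρ z) : ℝ) : ℂ)
            * (pairC (Hopf f ρ z) (Hopf f ρ z)
                * ((starRingEnd ℂ) (Hopf f ρ z i)
                  + 2 * (starRingEnd ℂ) (dZ ρ z) * WZb (Fc f) z i))) := by
    have e : (fun w => 2 * ((Real.exp (-2 * ρ w) : ℝ) : ℂ)
          * pairC (Hopf f ρ w) (Hopf f ρ w) * WZb (Fc f) w i)
        = fun w => (2 : ℂ) * (((Real.exp (-2 * ρ w) : ℝ) : ℂ)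
            * (pairC (Hopf f ρ w) (Hopf f ρ w) * WZb (Fc f) w i)) := by
      funext w; ring
    rw [e, wirtZbar_const_mul _ (((smExp hf (-2)).mul' ((smA hf).mul' (smFzb hf i))).dAt z),
      wirtZbar_mul ((smExp hf (-2)).dAt z) (((smA hf).mul' (smFzb hf i)).dAt z),
      wirtZbar_mul ((smA hf).dAt z) ((smFzb hf i).dAt z), hexpZb hf (-2) z, haZb hf z]
    have h3 : wirtZbar (fun w => WZb (Fc f) w i) z
        = (starRingEnd ℂ) (Hopf f ρ z i) + 2 * (starRingEnd ℂ) (dZ ρ z) * WZb (Fc f) z i := by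
      show WZb (WZb (Fc f)) z i = _
      rw [hWZbWZb hf z i, hconjFzz hf z i]
    rw [h3]
    ring
  rw [hsplit, hA, hB]
  push_cast
  ring

lemma NZNZb_hopf_zero (hf : IsConfMinImm f ρ) (z : ℂ) (i : Fin m) :
    NZ f ρ (NZb f ρ (Hopf f ρ)) z i = 0 := by
  show WZ (NZb f ρ (Hopf f ρ)) z i
      + 2 * ((Real.exp (-2 * ρ z) : ℝ) : ℂ)
        * pairC (NZb f ρ (Hopf f ρ) z) (Hopf f ρ z) * WZb (Fc f) z i = 0
  have h1 : WZ (NZb f ρ (Hopf f ρ)) z i = 0 := by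
    show wirtZ (fun w => NZb f ρ (Hopf f ρ) w i) z = 0
    rw [show (fun w => NZb f ρ (Hopf f ρ) w i) = fun _ => (0:ℂ) from
      funext fun w => NZb_hopf_zero hf w i, wirtZ_const]
  have h2 : pairC (NZb f ρ (Hopf f ρ) z) (Hopf f ρ z) = 0 := by
    unfold pairC
    exact Finset.sum_eq_zero fun i _ => by rw [NZb_hopf_zero hf z i, zero_mul]
  rw [h1, h2]
  ring

end Main6


/-- the complex traceless Simons identity (equation (3.1)),
`Δ^⊥ Ω = 4 e^{−4ρ} (⟨Ω, Ω⟩ Ω̄ − ⟨Ω, Ω̄⟩ Ω)`, where `Ω` is a normal field. -/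
theorem simons_identity (n : ℕ) (hn : 3 ≤ n)
    (f : ℂ → Fin (n + 1) → ℝ) (ρ : ℂ → ℝ) (hf : IsConfMinImm f ρ) :
    IsNormalField f (Hopf f ρ) ∧
    ∀ (z : ℂ) (i : Fin (n + 1)),
      LapPerp f ρ (Hopf f ρ) z i =
        4 * (Real.exp (-4 * ρ z) : ℂ) *
          (pairC (Hopf f ρ z) (Hopf f ρ z) * conjV (Hopf f ρ z) i
            - pairC (Hopf f ρ z) (conjV (Hopf f ρ z)) * Hopf f ρ z i) := by
  refine ⟨hopf_is_normal hf, fun z i => ?_⟩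
  show 2 * ((Real.exp (-2 * ρ z) : ℝ) : ℂ)
      * (NZb f ρ (NZ f ρ (Hopf f ρ)) z i + NZ f ρ (NZb f ρ (Hopf f ρ)) z i) = _
  rw [NZbNZ_hopf hf z i, NZNZb_hopf_zero hf z i]
  have hE4 : ((Real.exp (-2 * ρ z) : ℝ) : ℂ) * ((Real.exp (-2 * ρ z) : ℝ) : ℂ)
      = ((Real.exp (-4 * ρ z) : ℝ) : ℂ) := by
    rw [← Complex.ofReal_mul, ← Real.exp_add,
      show (-2 * ρ z) + (-2 * ρ z) = -4 * ρ z from by ring]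
  have hcv : conjV (Hopf f ρ z) i = (starRingEnd ℂ) (Hopf f ρ z i) := rfl
  rw [hcv]
  linear_combination (4 * (pairC (Hopf f ρ z) (Hopf f ρ z) * (starRingEnd ℂ) (Hopf f ρ z i)
    - pairC (Hopf f ρ z) (conjV (Hopf f ρ z)) * Hopf f ρ z i)) * hE4
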